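/- arXiv:2007.07464 — 2 statements merged into one kernel-verified Lean document; each statement's English description precedes it below -/
import Mathlib

section
/- Every graph in the family H_k (k ≥ 3), obtained from G_k by pasting distinct cliques onto the heavy edges, is strongly chordal. -/
def Gk (k : ℕ) : SimpleGraph (Fin (3 * k + 1)) where
  Adj a b := a ≠ b ∧ (a.val < k ∨ b.val < k ∨ a.val + 1 = b.val ∨ b.val + 1 = a.val)
  symm := by constructor; rintro a b ⟨h1, h2⟩; exact ⟨h1.symm, by tauto⟩
  loopless := by constructor; rintro a ⟨h, _⟩; exact h rfl

def xv (k : ℕ) (i : Fin k) : Fin (3 * k + 1) := ⟨i.val, by have := i.isLt; omega⟩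
def uv (k : ℕ) (i : Fin k) : Fin (3 * k + 1) := ⟨k + i.val, by have := i.isLt; omega⟩
def zv (k : ℕ) : Fin (3 * k + 1) := ⟨2 * k, by omega⟩
def vv (k : ℕ) (i : Fin k) : Fin (3 * k + 1) := ⟨3 * k - i.val, by omega⟩

/-- Index type for the heavy edges of `G_k`: `inl i` is the edge `x_{i+1}u_{i+1}`,
`inr i` is the edge `x_{i+1}v_{i+1}` (`i + 1 ≤ k - 1`). -/
abbrev HeavyIdx (k : ℕ) := Fin k ⊕ Fin (k - 1)

/-- The endpoints of a heavy edge of `G_k`. -/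
def heavyEnds (k : ℕ) : HeavyIdx k → Fin (3 * k + 1) × Fin (3 * k + 1)
  | .inl i => (xv k i, uv k i)
  | .inr i => (xv k (i.castLE (Nat.sub_le k 1)), vv k (i.castLE (Nat.sub_le k 1)))

/-- The graph obtained from `G_k` by pasting a (distinct) clique onto each heavy
edge.  `W` is the set of new vertices; the new vertex `w` belongs to the clique
pasted onto the heavy edge `f w`.  Each new vertex is adjacent to the other new
vertices of its own clique and to the two ends of its heavy edge, and to nothing
else.  When `f` is surjective, every pasted clique has order at least 3. -/
def pastedGk (k : ℕ) {W : Type*} (f : W → HeavyIdx k) :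
    SimpleGraph (Fin (3 * k + 1) ⊕ W) where
  Adj a b :=
    match a, b with
    | .inl a, .inl b => (Gk k).Adj a b
    | .inl a, .inr w => a = (heavyEnds k (f w)).1 ∨ a = (heavyEnds k (f w)).2
    | .inr w, .inl a => a = (heavyEnds k (f w)).1 ∨ a = (heavyEnds k (f w)).2
    | .inr w, .inr w' => w ≠ w' ∧ f w = f w'
  symm := by
    constructor
    rintro (a | w) (b | w') h
    · exact (Gk k).adj_symm h
    · exact h
    · exact h
    · exact ⟨h.1.symm, h.2.symm⟩
  loopless := by
    constructor
    rintro (a | w) h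
    · exact (Gk k).irrefl h
    · exact h.1 rfl

/-- A graph is chordal if it has no induced cycle of length at least 4. -/
def IsChordal {V : Type*} (G : SimpleGraph V) : Prop :=
  ∀ n, 4 ≤ n → IsEmpty (SimpleGraph.cycleGraph n ↪g G)

/-- A graph is strongly chordal if it is chordal and every even cycle of length at
least 6 has a chord joining two vertices at odd distance from each other along the
cycle. -/
def IsStronglyChordal {V : Type*} (G : SimpleGraph V) : Prop :=
  IsChordal G ∧ ∀ (v : V) (c : G.Walk v v), c.IsCycle → 6 ≤ c.length → Even c.length →
    ∃ i j, i < j ∧ j < c.length ∧ Odd (j - i) ∧ j - i ≠ 1 ∧ ¬(i = 0 ∧ j = c.length - 1) ∧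
      G.Adj (c.getVert i) (c.getVert j)

/-!
A pasted vertex `w` on the heavy edge `x p` is simple in Farber's sense: its closed neighbourhood
is the pasted clique `K ∪ {x, p}`, and `N[w'] = K ∪ {x, p} ⊆ N[p] ⊆ N[x]` for `w'` in `K`. In a
cycle of length at least `4` with no chord between vertices at distance `d ∈ {2, 3}` along it, no
vertex is simple, so such a cycle avoids the pasted vertices; it then avoids the clique vertices
`x_i`, which are adjacent to every other vertex of `G_k`; and it cannot run along the path alone,
since both cycle-neighbours of its furthest vertex would be that vertex's predecessor. So every
cycle of length at least `4` has chords at distance `2` (chordality) and `3` along it, and the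
latter is an odd chord when the cycle is even.
-/

open Function Sum Fin.CommRing

lemma Fin.natCast_ne_zero_of_pos_of_lt {n d : ℕ} [NeZero n] (h0 : 0 < d) (hd : d < n) :
    (d : Fin n) ≠ 0 := by
  rw [Ne, Fin.natCast_eq_zero]
  exact fun h => (Nat.le_of_dvd h0 h).not_gt hd

/-- Both neighbours of a maximal term equal that term minus one. -/
lemma Fin.not_injective_of_forall_add_one_eq_or {n : ℕ} [NeZero n] (hn : 3 ≤ n) {g : Fin n → ℕ}
    (hg : ∀ i, g i + 1 = g (i + 1) ∨ g (i + 1) + 1 = g i) : ¬ Injective g := by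
  intro hinj
  obtain ⟨m, hm⟩ := Finite.exists_max g
  have hsucc : g (m + 1) + 1 = g m := (hg m).resolve_left (by have := hm (m + 1); omega)
  have hpred : g (m - 1) + 1 = g m := by
    have := hg (m - 1)
    rw [sub_add_cancel] at this
    have := hm (m - 1)
    omega
  have hmm : m + 1 = m - 1 := hinj (by omega)
  exact Fin.natCast_ne_zero_of_pos_of_lt (n := n) (d := 2) (by omega) (by omega)
    (by push_cast; linear_combination hmm)

namespace SimpleGraph

variable {V : Type*} {G : SimpleGraph V}

variable (G) in
def closedNeighborSet (v : V) : Set V := insert v (G.neighborSet v)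

variable (G) in
def IsSimpleVertex (v : V) : Prop :=
  ∀ a ∈ G.closedNeighborSet v, ∀ b ∈ G.closedNeighborSet v,
    G.closedNeighborSet a ⊆ G.closedNeighborSet b ∨ G.closedNeighborSet b ⊆ G.closedNeighborSet a

lemma IsClique.subset_closedNeighborSet {s : Set V} (hs : G.IsClique s) {v : V} (hv : v ∈ s) :
    s ⊆ G.closedNeighborSet v := fun w hw =>
  (eq_or_ne w v).imp id fun hne => hs hv hw hne.symm

/-- If `N[c (j + 1)] ⊆ N[c (j - 1)]`, then `c (j - 1)` is adjacent to `c (j - 1 + d)`, which lies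
in `N[c (j + 1)]`; symmetrically otherwise. -/
lemma exists_adj_add_of_isSimpleVertex {n : ℕ} [NeZero n] {c : Fin n → V} (hc : Injective c)
    (hadj : ∀ i, G.Adj (c i) (c (i + 1))) {d : ℕ} (hd : d = 2 ∨ d = 3) (hdn : d < n) {j : Fin n}
    (hj : G.IsSimpleVertex (c j)) : ∃ i, G.Adj (c i) (c (i + d)) := by
  have hd0 : (d : Fin n) ≠ 0 := Fin.natCast_ne_zero_of_pos_of_lt (by omega) hdn
  have hpred : c (j - 1) ∈ G.closedNeighborSet (c j) :=
    Or.inr (by simpa using (hadj (j - 1)).symm)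
  have hsucc : c (j + 1) ∈ G.closedNeighborSet (c j) := Or.inr (hadj j)
  rcases hj _ hpred _ hsucc with hsub | hsub
  · refine ⟨j + 1 - d, ?_⟩
    have hmem : c (j + 1 - d) ∈ G.closedNeighborSet (c (j - 1)) := by
      rcases hd with rfl | rfl
      · left; congr 1; push_cast; ring
      · right
        rw [show j - 1 = j + 1 - ((3 : ℕ) : Fin n) + 1 by push_cast; ring]
        exact (hadj _).symm
    rcases hsub hmem with h | h
    · exact absurd (by simpa using hc h) hd0
    · simpa using h.symm
  · refine ⟨j - 1, ?_⟩
    have hmem : c (j - 1 + d) ∈ G.closedNeighborSet (c (j + 1)) := by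
      rcases hd with rfl | rfl
      · left; congr 1; push_cast; ring
      · right
        rw [show j - 1 + ((3 : ℕ) : Fin n) = j + 1 + 1 by push_cast; ring]
        exact hadj _
    rcases hsub hmem with h | h
    · exact absurd (by simpa using hc h) hd0
    · exact h

lemma cycleGraph_adj_add_one {n : ℕ} [NeZero n] (hn : 2 ≤ n) (i : Fin n) :
    (cycleGraph n).Adj i (i + 1) := by
  obtain ⟨m, rfl⟩ : ∃ m, n = m + 2 := ⟨n - 2, by omega⟩
  simp [cycleGraph_adj]

lemma not_cycleGraph_adj_add {n d : ℕ} [NeZero n] (hd : 1 < d) (hdn : d + 1 < n) (i : Fin n) :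
    ¬ (cycleGraph n).Adj i (i + d) := by
  rw [cycleGraph_adj', sub_add_cancel_left, add_sub_cancel_left, Fin.val_neg', Fin.val_natCast,
    Nat.mod_eq_of_lt (by omega : d < n), Nat.mod_eq_of_lt (by omega : n - d < n)]
  omega

namespace Walk

variable {u : V}

lemma IsCycle.injective_getVert_fin {p : G.Walk u u} (hp : p.IsCycle) :
    Injective fun i : Fin p.length => p.getVert i := fun i j h =>
  Fin.ext (hp.getVert_injOn' (by simp; omega) (by simp; omega) h)

lemma adj_getVert_fin_add_one (p : G.Walk u u) [NeZero p.length] (i : Fin p.length) :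
    G.Adj (p.getVert i) (p.getVert ↑(i + 1)) := by
  have hwrap : p.getVert ((i + 1 : ℕ) % p.length) = p.getVert (i + 1) := by
    rcases (Nat.lt_or_ge (i + 1) p.length) with h | h
    · rw [Nat.mod_eq_of_lt h]
    · rw [show (i : ℕ) + 1 = p.length by omega, Nat.mod_self, getVert_zero, getVert_length]
  simpa [Fin.val_add, hwrap] using p.adj_getVert_succ i.isLt

/-- When the chord wraps around the start of the walk, its ends are `length - 3` apart, which is
odd for an even cycle. -/
lemma exists_odd_chord_of_adj_add_three {p : G.Walk u u} [NeZero p.length] (h6 : 6 ≤ p.length)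
    (heven : Even p.length) {i : Fin p.length}
    (hi : G.Adj (p.getVert i) (p.getVert ↑(i + ((3 : ℕ) : Fin p.length)))) :
    ∃ a b, a < b ∧ b < p.length ∧ Odd (b - a) ∧ b - a ≠ 1 ∧ ¬(a = 0 ∧ b = p.length - 1) ∧
      G.Adj (p.getVert a) (p.getVert b) := by
  rw [Fin.val_add, Fin.val_natCast, Nat.mod_eq_of_lt (by omega : 3 < p.length)] at hi
  have hlt := i.isLt
  rcases Nat.lt_or_ge (i + 3) p.length with h | h
  · rw [Nat.mod_eq_of_lt h] at hi
    exact ⟨i, i + 3, by omega, h, by simp [Nat.odd_iff], by omega, by omega, hi⟩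
  · rw [Nat.mod_eq_sub_mod h, Nat.mod_eq_of_lt (by omega)] at hi
    obtain ⟨m, hm⟩ := heven
    exact ⟨i + 3 - p.length, i, by omega, hlt, ⟨m - 2, by omega⟩, by omega, by omega, hi.symm⟩

end Walk

end SimpleGraph

lemma heavyEnds_fst_lt {k : ℕ} (e : HeavyIdx k) : ((heavyEnds k e).1 : ℕ) < k := by
  cases e <;> simp [heavyEnds, xv]; omega

lemma le_heavyEnds_snd {k : ℕ} (e : HeavyIdx k) : k ≤ ((heavyEnds k e).2 : ℕ) := by
  cases e <;> simp [heavyEnds, uv, vv]; omega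

lemma heavyEnds_fst_ne_snd {k : ℕ} (e : HeavyIdx k) : (heavyEnds k e).1 ≠ (heavyEnds k e).2 :=
  Fin.ne_of_val_ne ((heavyEnds_fst_lt e).trans_le (le_heavyEnds_snd e)).ne

lemma heavyEnds_snd_injective (k : ℕ) : Injective fun e : HeavyIdx k => (heavyEnds k e).2 := by
  rintro (i | i) (j | j) h <;> have := i.isLt <;> have := j.isLt <;>
    simp [heavyEnds, uv, vv, Fin.ext_iff] at h ⊢ <;> omega

namespace pastedGk

open SimpleGraph

variable {k : ℕ} {W : Type*} {f : W → HeavyIdx k}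

lemma adj_inl_of_lt {a b : Fin (3 * k + 1)} (ha : (a : ℕ) < k) (hab : a ≠ b) :
    (pastedGk k f).Adj (inl a) (inl b) :=
  ⟨hab, Or.inl ha⟩

lemma adj_inl_iff_of_le {a b : Fin (3 * k + 1)} (ha : k ≤ (a : ℕ)) (hb : k ≤ (b : ℕ)) :
    (pastedGk k f).Adj (inl a) (inl b) ↔ (a : ℕ) + 1 = b ∨ (b : ℕ) + 1 = a := by
  refine ⟨fun ⟨_, h⟩ => by omega, fun h => ⟨fun hab => ?_, by omega⟩⟩
  subst hab
  omega

variable (f) in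
/-- The clique pasted onto the heavy edge `e`, together with the two ends of `e`. -/
def heavyClique (e : HeavyIdx k) : Set (Fin (3 * k + 1) ⊕ W) :=
  {y | Sum.elim (fun a => a = (heavyEnds k e).1 ∨ a = (heavyEnds k e).2) (fun w => f w = e) y}

lemma isClique_heavyClique (e : HeavyIdx k) : (pastedGk k f).IsClique (heavyClique f e) := by
  rintro (a | w) ha (b | w') hb hne
  · have hab : a ≠ b := fun h => hne (congrArg inl h)
    rcases ha with rfl | rfl <;> rcases hb with rfl | rfl
    · exact absurd rfl hab
    · exact adj_inl_of_lt (heavyEnds_fst_lt e) hab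
    · exact (adj_inl_of_lt (heavyEnds_fst_lt e) hab.symm).symm
    · exact absurd rfl hab
  · change f w' = e at hb
    subst hb
    exact ha
  · change f w = e at ha
    subst ha
    exact hb
  · exact ⟨fun h => hne (congrArg inr h), ha.trans hb.symm⟩

lemma closedNeighborSet_inr (w : W) :
    (pastedGk k f).closedNeighborSet (inr w) = heavyClique f (f w) := by
  ext (a | w')
  · simp [closedNeighborSet, heavyClique, pastedGk]
  · change inr w' = inr w ∨ (w ≠ w' ∧ f w = f w') ↔ f w' = f w
    rw [inr.injEq]
    refine ⟨?_, fun h => (eq_or_ne w' w).imp_right fun hne => ⟨hne.symm, h.symm⟩⟩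
    rintro (rfl | ⟨-, h⟩)
    exacts [rfl, h.symm]

lemma closedNeighborSet_snd_subset_fst (e : HeavyIdx k) :
    (pastedGk k f).closedNeighborSet (inl (heavyEnds k e).2) ⊆
      (pastedGk k f).closedNeighborSet (inl (heavyEnds k e).1) := by
  rintro y (rfl | hy)
  · exact Or.inr (adj_inl_of_lt (f := f) (heavyEnds_fst_lt e) (heavyEnds_fst_ne_snd e))
  rcases y with a | w
  · by_cases ha : a = (heavyEnds k e).1
    · exact Or.inl (congrArg inl ha)
    · exact Or.inr (adj_inl_of_lt (f := f) (heavyEnds_fst_lt e) (Ne.symm ha))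
  · rcases hy with h | h
    · exact absurd (congrArg Fin.val h)
        ((heavyEnds_fst_lt (f w)).trans_le (le_heavyEnds_snd e)).ne'
    · have hw : e = f w := heavyEnds_snd_injective k h
      exact Or.inr (Or.inl (by rw [hw]))

lemma closedNeighborSet_inr_subset {w w' : W} (hw : f w' = f w) {y : Fin (3 * k + 1) ⊕ W}
    (hy : y ∈ heavyClique f (f w)) :
    (pastedGk k f).closedNeighborSet (inr w') ⊆ (pastedGk k f).closedNeighborSet y := by
  rw [closedNeighborSet_inr, hw]
  exact (isClique_heavyClique _).subset_closedNeighborSet hy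

lemma isSimpleVertex_inr (w : W) : (pastedGk k f).IsSimpleVertex (inr w) := by
  rw [IsSimpleVertex, closedNeighborSet_inr]
  rintro (a | w₁) ha (b | w₂) hb
  · rcases ha with rfl | rfl <;> rcases hb with rfl | rfl
    · exact Or.inl subset_rfl
    · exact Or.inr (closedNeighborSet_snd_subset_fst _)
    · exact Or.inl (closedNeighborSet_snd_subset_fst _)
    · exact Or.inl subset_rfl
  · exact Or.inr (closedNeighborSet_inr_subset hb ha)
  · exact Or.inl (closedNeighborSet_inr_subset ha hb)
  · exact Or.inl (closedNeighborSet_inr_subset ha hb)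

theorem exists_adj_add {n : ℕ} [NeZero n] {c : Fin n → Fin (3 * k + 1) ⊕ W} (hc : Injective c)
    (hadj : ∀ i, (pastedGk k f).Adj (c i) (c (i + 1))) {d : ℕ} (hd : d = 2 ∨ d = 3)
    (hdn : d < n) : ∃ i, (pastedGk k f).Adj (c i) (c (i + d)) := by
  by_contra! hno
  have hinl : ∀ i, ∃ a, c i = inl a := fun i => by
    rcases hci : c i with a | w
    · exact ⟨a, rfl⟩
    · obtain ⟨j, hj⟩ := exists_adj_add_of_isSimpleVertex hc hadj hd hdn (j := i)
        (hci ▸ isSimpleVertex_inr w)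
      exact absurd hj (hno j)
  choose g hg using hinl
  have hginj : Injective g := fun i j h => hc (by rw [hg, hg, h])
  have hd0 : (d : Fin n) ≠ 0 := Fin.natCast_ne_zero_of_pos_of_lt (by omega) hdn
  have hpath : ∀ i, k ≤ (g i : ℕ) := fun i => by
    by_contra! h
    refine hno i ?_
    rw [hg, hg]
    exact adj_inl_of_lt h (hginj.ne (Ne.symm (mt add_eq_left.1 hd0)))
  have hstep : ∀ i, (g i : ℕ) + 1 = g (i + 1) ∨ (g (i + 1) : ℕ) + 1 = g i := fun i =>
    (adj_inl_iff_of_le (f := f) (hpath i) (hpath (i + 1))).1 (by simpa only [hg] using hadj i)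
  exact Fin.not_injective_of_forall_add_one_eq_or (by omega) hstep (Fin.val_injective.comp hginj)

theorem isChordal (k : ℕ) {W : Type*} (f : W → HeavyIdx k) : IsChordal (pastedGk k f) := by
  intro n hn
  refine ⟨fun φ => ?_⟩
  have : NeZero n := ⟨by omega⟩
  obtain ⟨i, hi⟩ := exists_adj_add φ.injective
    (fun i => φ.map_adj_iff.2 (cycleGraph_adj_add_one (by omega) i)) (Or.inl rfl) (by omega)
  exact not_cycleGraph_adj_add (by omega) (by omega) i (φ.map_adj_iff.1 hi)

end pastedGk

theorem stmt6_general (k : ℕ) {W : Type*} (f : W → HeavyIdx k) : IsStronglyChordal (pastedGk k f) := by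
  refine ⟨pastedGk.isChordal k f, fun v c hc hlen heven => ?_⟩
  have : NeZero c.length := ⟨by omega⟩
  obtain ⟨i, hi⟩ := pastedGk.exists_adj_add hc.injective_getVert_fin c.adj_getVert_fin_add_one
    (Or.inr rfl) (by omega)
  exact c.exists_odd_chord_of_adj_add_three hlen heven hi

/-- stmt6: every graph obtained from `G_k` by pasting distinct cliques onto the
heavy edges is strongly chordal. -/
theorem stmt6 (k : ℕ) (hk : 3 ≤ k) {W : Type*} (f : W → HeavyIdx k)
    (hf : Function.Surjective f) : IsStronglyChordal (pastedGk k f) :=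
  stmt6_general k f
end

section
/- The graph G_k = K_k ∨ P_{2k+1} is the intersection graph of a family of subtrees of a tree T, where T is a path p_1 p_2 ⋯ p_{2k} with a pendant leaf q_i attached to each p_i except p_{k+1}; consequently T has 2k−1 leaves and 2k−3 branch vertices (vertices of degree at least 3). -/
/-- Vertices of the decomposition tree `T`: `inl j` is the path vertex `p_{j+1}`
(for `1 ≤ j+1 ≤ 2k`), and `inr q` is the pendant leaf `q_{j+1}` attached to
`p_{j+1}`, which exists for every `j+1 ≠ k+1`. -/
abbrev TreeVert (k : ℕ) := Fin (2 * k) ⊕ {j : Fin (2 * k) // j.val ≠ k}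

/-- The decomposition tree `T` : a path `p_1 ⋯ p_{2k}` with a pendant leaf `q_i`
at each `p_i` except `p_{k+1}`. -/
def Tk (k : ℕ) : SimpleGraph (TreeVert k) where
  Adj a b :=
    match a, b with
    | .inl i, .inl j => i.val + 1 = j.val ∨ j.val + 1 = i.val
    | .inl i, .inr q => q.1 = i
    | .inr q, .inl i => q.1 = i
    | .inr _, .inr _ => False
  symm := by constructor; rintro (i | q) (j | r) h <;> simp_all <;> tauto
  loopless := by constructor; rintro (i | q) h <;> simp_all

/-- The subtree of `T` assigned to each vertex of `G_k` (a vertex as a set of tree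
vertices).  For a clique vertex `x_{a+1}` (`a < k`) the subtree is all of the path
`P` together with `q_{a+1}` and `q_{2k-a}` (paper indexing); a path vertex of `G_k`
at position `t = a - k` along `u_1,...,u_k,z,v_k,...,v_1` gets the one or two path
vertices `p` with index `t-1` or `t` together with its pendant leaf, if any. -/
def Fsub (k : ℕ) (a : Fin (3 * k + 1)) : Set (TreeVert k) :=
  {w | match w with
    | .inl p => k ≤ a.val → (p.val = a.val - k - 1 ∨ p.val = a.val - k)
    | .inr q =>
        if a.val < k then q.1.val = a.val ∨ q.1.val = 2 * k - 1 - a.val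
        else (a.val - k ≤ k - 1 ∧ q.1.val = a.val - k) ∨
          (k + 2 ≤ a.val - k ∧ q.1.val = a.val - k - 1)}

/-!
`T` is a tree: it is connected because every vertex other than `p_1` has a neighbour that comes
earlier in the order `p_1, q_1, p_2, q_2, …`, and every edge is a bridge because it is the only edge
leaving an initial segment of that order (or the set `{q_i}`). Each vertex of `G_k` gets a subtree
rooted at a path vertex, and its other vertices again have earlier neighbours inside it. The
subtree of a clique vertex contains the whole path, so it meets every other subtree; the subtrees
of path vertices `t` and `t'` of `G_k` share a path vertex exactly when `|t - t'| = 1`, and the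
pendant leaves are placed so that they create no further intersections. The leaves of `T` are the `2k - 1` vertices `q_i`, and the branch
vertices are the `p_i` other than `p_1`, `p_{k+1}` and `p_{2k}`.
-/

namespace SimpleGraph

variable {V : Type*} {G : SimpleGraph V}

theorem isBridge_of_forall_crossing_eq {u v : V} (S : Set V) (hu : u ∈ S) (hv : v ∉ S)
    (hS : ∀ x y, G.Adj x y → x ∈ S → y ∉ S → s(x, y) = s(u, v)) : G.IsBridge s(u, v) := by
  rw [isBridge_iff]
  rintro ⟨p⟩
  suffices ∀ {x y} (p : (G.deleteEdges {s(u, v)}).Walk x y), x ∈ S → y ∈ S from hv (this p hu)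
  intro x y p
  induction p with
  | nil => exact id
  | cons h _ ih =>
    rw [deleteEdges_adj] at h
    exact fun hx => ih (by_contra fun hy => h.2 (hS _ _ h.1 hx hy))

theorem connected_of_exists_adj_lt (u : V) (f : V → ℕ)
    (h : ∀ v, v ≠ u → ∃ w, G.Adj v w ∧ f w < f v) : G.Connected := by
  suffices ∀ n v, f v = n → G.Reachable v u from
    (connected_iff_exists_forall_reachable G).2 ⟨u, fun v => (this _ v rfl).symm⟩
  intro n
  induction n using Nat.strong_induction_on with
  | _ n ih =>
    rintro v rfl
    obtain rfl | hvu := eq_or_ne v u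
    · rfl
    obtain ⟨w, hvw, hw⟩ := h v hvu
    exact hvw.reachable.trans (ih _ hw w rfl)

end SimpleGraph

open SimpleGraph

variable {k : ℕ}

/-- The position of a vertex in the order `p_1, q_1, p_2, q_2, …, p_{2k}, q_{2k}`. -/
def TreeVert.toNat : TreeVert k → ℕ :=
  Sum.elim (fun p => 2 * p.val) (fun q => 2 * q.1.val + 1)

@[simp] theorem TreeVert.toNat_inl (p : Fin (2 * k)) :
    TreeVert.toNat (Sum.inl p : TreeVert k) = 2 * p.val :=
  rfl

@[simp] theorem TreeVert.toNat_inr (q : {j : Fin (2 * k) // j.val ≠ k}) :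
    TreeVert.toNat (Sum.inr q : TreeVert k) = 2 * q.1.val + 1 :=
  rfl

theorem TreeVert.toNat_injective : Function.Injective (TreeVert.toNat (k := k)) := by
  rintro (p | q) (p' | q') h <;> simp only [toNat_inl, toNat_inr] at h
  · exact congrArg Sum.inl (Fin.ext (by omega))
  · omega
  · omega
  · exact congrArg Sum.inr (Subtype.ext (Fin.ext (by omega)))

@[simp] theorem tk_adj_inl_inl {i j : Fin (2 * k)} :
    (Tk k).Adj (.inl i) (.inl j) ↔ i.val + 1 = j.val ∨ j.val + 1 = i.val := .rfl

@[simp] theorem tk_adj_inl_inr {i : Fin (2 * k)} {q : {j : Fin (2 * k) // j.val ≠ k}} :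
    (Tk k).Adj (.inl i) (.inr q) ↔ q.1 = i := .rfl

@[simp] theorem tk_adj_inr_inl {i : Fin (2 * k)} {q : {j : Fin (2 * k) // j.val ≠ k}} :
    (Tk k).Adj (.inr q) (.inl i) ↔ q.1 = i := .rfl

@[simp] theorem tk_not_adj_inr_inr {q r : {j : Fin (2 * k) // j.val ≠ k}} :
    ¬ (Tk k).Adj (.inr q) (.inr r) := id

theorem tk_connected (hk : 0 < k) : (Tk k).Connected := by
  refine connected_of_exists_adj_lt (.inl ⟨0, by omega⟩) TreeVert.toNat ?_
  rintro (p | q) hv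
  · have hp : p.val ≠ 0 := fun h => hv (congrArg Sum.inl (Fin.ext h))
    exact ⟨.inl ⟨p.val - 1, by omega⟩, tk_adj_inl_inl.2 (by dsimp only; omega),
      by simp only [TreeVert.toNat_inl]; omega⟩
  · exact ⟨.inl q.1, rfl, by simp⟩

theorem tk_isAcyclic : (Tk k).IsAcyclic := by
  have path_bridge (i j : Fin (2 * k)) (hij : i.val + 1 = j.val) :
      (Tk k).IsBridge s(.inl i, .inl j) := by
    refine isBridge_of_forall_crossing_eq {x | x.toNat ≤ 2 * i.val + 1}
      (by simp) (by simp only [Set.mem_ofPred_eq, TreeVert.toNat_inl, not_le]; omega) ?_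
    rintro (a | q) (b | r) hab hx hy <;>
      simp only [Set.mem_ofPred_eq, TreeVert.toNat_inl, TreeVert.toNat_inr, not_le,
        tk_adj_inl_inl, tk_adj_inl_inr, tk_adj_inr_inl] at hab hx hy
    · obtain rfl : a = i := Fin.ext (by omega)
      obtain rfl : b = j := Fin.ext (by omega)
      rfl
    · rw [hab] at hy; omega
    · rw [hab] at hx; omega
    · exact absurd hab tk_not_adj_inr_inr
  have pendant_bridge (q : {j : Fin (2 * k) // j.val ≠ k}) :
      (Tk k).IsBridge s(.inr q, .inl q.1) := by
    refine isBridge_of_forall_crossing_eq {.inr q} rfl (by simp) ?_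
    rintro x (b | r) hxy rfl hy
    · obtain rfl : q.1 = b := hxy
      rfl
    · exact absurd hxy tk_not_adj_inr_inr
  rw [isAcyclic_iff_forall_adj_isBridge]
  rintro (i | q) (j | r) hadj
  · rcases hadj with h | h
    · exact path_bridge i j h
    · rw [Sym2.eq_swap]; exact path_bridge j i h
  · obtain rfl : r.1 = i := hadj
    rw [Sym2.eq_swap]; exact pendant_bridge r
  · obtain rfl : q.1 = j := hadj
    exact pendant_bridge q
  · exact absurd hadj tk_not_adj_inr_inr

theorem tk_neighborSet_inr (q : {j : Fin (2 * k) // j.val ≠ k}) :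
    (Tk k).neighborSet (.inr q) = {.inl q.1} := by
  ext (i | r) <;> simp [eq_comm]

theorem tk_one_lt_ncard_neighborSet_inl (hk : 2 ≤ k) (i : Fin (2 * k)) :
    1 < ((Tk k).neighborSet (.inl i)).ncard := by
  have hi := i.isLt
  rw [Set.one_lt_ncard_iff]
  by_cases hik : i.val = k
  · exact ⟨.inl ⟨k - 1, by omega⟩, .inl ⟨k + 1, by omega⟩, tk_adj_inl_inl.2 (by dsimp only; omega),
      tk_adj_inl_inl.2 (by dsimp only; omega), by simp⟩
  · exact ⟨.inl ⟨if i.val = 0 then 1 else i.val - 1, by split_ifs <;> omega⟩, .inr ⟨i, hik⟩,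
      tk_adj_inl_inl.2 (by dsimp only; split_ifs <;> omega), rfl, by simp⟩

theorem tk_three_le_ncard_neighborSet_inl_iff (hk : 2 ≤ k) (i : Fin (2 * k)) :
    3 ≤ ((Tk k).neighborSet (.inl i)).ncard ↔ 0 < i.val ∧ i.val < 2 * k - 1 ∧ i.val ≠ k := by
  have hi := i.isLt
  constructor
  · intro h3
    by_contra! hend
    -- at an end of the path or at `p_{k+1}`, one of the three candidate neighbours is missing
    obtain ⟨m, n, hmn⟩ : ∃ m n, TreeVert.toNat '' (Tk k).neighborSet (.inl i) ⊆ {m, n} := by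
      refine ⟨if i.val = 0 then 1 else 2 * i.val - 2,
        if i.val = 2 * k - 1 then 2 * i.val + 1 else 2 * i.val + 2, ?_⟩
      rintro _ ⟨j | r, hj, rfl⟩ <;>
        simp only [mem_neighborSet, tk_adj_inl_inl, tk_adj_inl_inr, TreeVert.toNat_inl,
          TreeVert.toNat_inr, Set.mem_insert_iff, Set.mem_singleton_iff] at hj ⊢
      · split_ifs <;> omega
      · rw [hj]; split_ifs <;> omega
    have := (Set.ncard_image_of_injective _ TreeVert.toNat_injective).symm.trans_le
      ((Set.ncard_le_ncard hmn).trans (Set.ncard_insert_le m {n}))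
    rw [Set.ncard_singleton] at this
    omega
  · rintro ⟨h0, hlast, hik⟩
    rw [Nat.succ_le_iff, Set.two_lt_ncard_iff]
    exact ⟨.inl ⟨i.val - 1, by omega⟩, .inl ⟨i.val + 1, by omega⟩, .inr ⟨i, hik⟩,
      tk_adj_inl_inl.2 (by dsimp only; omega), tk_adj_inl_inl.2 (Or.inl rfl), rfl,
      by simp, by simp, by simp⟩

theorem tk_setOf_ncard_neighborSet_eq_one (hk : 2 ≤ k) :
    {v | ((Tk k).neighborSet v).ncard = 1} = Set.range Sum.inr := by
  ext (i | q)
  · simpa using (tk_one_lt_ncard_neighborSet_inl hk i).ne'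
  · simp [tk_neighborSet_inr]

theorem tk_setOf_three_le_ncard_neighborSet (hk : 2 ≤ k) :
    {v | 3 ≤ ((Tk k).neighborSet v).ncard} =
      Sum.inl '' {i | 0 < i.val ∧ i.val < 2 * k - 1 ∧ i.val ≠ k} := by
  ext (i | q)
  · simp [tk_three_le_ncard_neighborSet_inl_iff hk]
  · simp [tk_neighborSet_inr]

theorem tk_ncard_leaves (hk : 2 ≤ k) :
    {v | ((Tk k).neighborSet v).ncard = 1}.ncard = 2 * k - 1 := by
  have : {j : Fin (2 * k) | j.val ≠ k} = {⟨k, by omega⟩}ᶜ := by ext; simp [Fin.ext_iff]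
  rw [tk_setOf_ncard_neighborSet_eq_one hk, Set.ncard_range_of_injective Sum.inr_injective,
    ← Set.coe_ofPred, Nat.card_coe_set_eq, this, Set.ncard_compl]
  simp

theorem tk_ncard_branchVertices (hk : 2 ≤ k) :
    {v | 3 ≤ ((Tk k).neighborSet v).ncard}.ncard = 2 * k - 3 := by
  have : {i : Fin (2 * k) | 0 < i.val ∧ i.val < 2 * k - 1 ∧ i.val ≠ k} =
      {⟨0, by omega⟩, ⟨k, by omega⟩, ⟨2 * k - 1, by omega⟩}ᶜ := by
    ext i
    simp only [Set.mem_ofPred_eq, Set.mem_compl_iff, Set.mem_insert_iff, Set.mem_singleton_iff,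
      Fin.ext_iff]
    omega
  rw [tk_setOf_three_le_ncard_neighborSet hk, Set.ncard_image_of_injective _ Sum.inl_injective,
    this, Set.ncard_compl, Set.ncard_eq_three.2 ⟨_, _, _, Fin.ne_of_val_ne (by dsimp only; omega),
      Fin.ne_of_val_ne (by dsimp only; omega), Fin.ne_of_val_ne (by dsimp only; omega), rfl⟩]
  simp

theorem mem_fsub_inl {a : Fin (3 * k + 1)} {p : Fin (2 * k)} :
    .inl p ∈ Fsub k a ↔ (k ≤ a.val → p.val = a.val - k - 1 ∨ p.val = a.val - k) := .rfl

theorem mem_fsub_inr {a : Fin (3 * k + 1)} {q : {j : Fin (2 * k) // j.val ≠ k}} :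
    .inr q ∈ Fsub k a ↔
      if a.val < k then q.1.val = a.val ∨ q.1.val = 2 * k - 1 - a.val
      else (a.val - k ≤ k - 1 ∧ q.1.val = a.val - k) ∨
        (k + 2 ≤ a.val - k ∧ q.1.val = a.val - k - 1) := .rfl

/-- The root of the subtree `Fsub k a`; for a clique vertex `a.val - k - 1 = 0` by truncated
subtraction. -/
theorem inl_mem_fsub {a : Fin (3 * k + 1)} {p : Fin (2 * k)} (hp : p.val = a.val - k - 1) :
    .inl p ∈ Fsub k a :=
  mem_fsub_inl.2 fun _ => Or.inl hp

theorem fsub_nonempty (hk : 0 < k) (a : Fin (3 * k + 1)) : (Fsub k a).Nonempty :=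
  ⟨.inl ⟨a.val - k - 1, by omega⟩, inl_mem_fsub rfl⟩

theorem fsub_connected (hk : 0 < k) (a : Fin (3 * k + 1)) :
    ((Tk k).induce (Fsub k a)).Connected := by
  refine connected_of_exists_adj_lt ⟨.inl ⟨a.val - k - 1, by omega⟩, inl_mem_fsub rfl⟩
    (fun v => v.1.toNat) ?_
  rintro ⟨p | q, hv⟩ hne
  · have hp : p.val ≠ a.val - k - 1 := fun h => hne (Subtype.ext (congrArg Sum.inl (Fin.ext h)))
    have := mem_fsub_inl.1 hv
    exact ⟨⟨.inl ⟨p.val - 1, by omega⟩, mem_fsub_inl.2 fun _ => by dsimp only; omega⟩,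
      induce_adj.2 (tk_adj_inl_inl.2 (by dsimp only; omega)),
      by simp only [TreeVert.toNat_inl]; omega⟩
  · refine ⟨⟨.inl q.1, mem_fsub_inl.2 fun hka => ?_⟩, induce_adj.2 rfl, by simp⟩
    have := mem_fsub_inr.1 hv
    rw [if_neg (by omega)] at this
    omega

theorem fsub_inter_nonempty_iff (hk : 0 < k) {a b : Fin (3 * k + 1)} (hab : a ≠ b) :
    (Fsub k a ∩ Fsub k b).Nonempty ↔
      a.val < k ∨ b.val < k ∨ a.val + 1 = b.val ∨ b.val + 1 = a.val := by
  have ha := a.isLt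
  have hb := b.isLt
  have hab' : a.val ≠ b.val := Fin.val_ne_of_ne hab
  constructor
  · rintro ⟨p | q, hpa, hpb⟩
    · have := mem_fsub_inl.1 hpa
      have := mem_fsub_inl.1 hpb
      omega
    · rw [mem_fsub_inr] at hpa hpb
      split_ifs at hpa hpb <;> omega
  · intro h
    by_cases hbase : a.val < k ∨ a.val + 1 = b.val
    · exact ⟨.inl ⟨b.val - k - 1, by omega⟩, mem_fsub_inl.2 fun _ => by dsimp only; omega,
        inl_mem_fsub rfl⟩
    · exact ⟨.inl ⟨a.val - k - 1, by omega⟩, inl_mem_fsub rfl,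
        mem_fsub_inl.2 fun _ => by dsimp only; omega⟩

/-- stmt13: `G_k` is the intersection graph of a family of subtrees of the tree
`T`, which has `2k-1` leaves and `2k-3` branch vertices. -/
theorem stmt13 (k : ℕ) (hk : 3 ≤ k) :
    (Tk k).IsTree ∧
    (∀ a, (Fsub k a).Nonempty ∧ ((Tk k).induce (Fsub k a)).Connected) ∧
    (∀ a b, (Gk k).Adj a b ↔ a ≠ b ∧ (Fsub k a ∩ Fsub k b).Nonempty) ∧
    {v | ((Tk k).neighborSet v).ncard = 1}.ncard = 2 * k - 1 ∧
    {v | 3 ≤ ((Tk k).neighborSet v).ncard}.ncard = 2 * k - 3 :=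
  ⟨⟨tk_connected (by omega), tk_isAcyclic⟩,
    fun a => ⟨fsub_nonempty (by omega) a, fsub_connected (by omega) a⟩,
    fun a b => and_congr_right fun hab => (fsub_inter_nonempty_iff (by omega) hab).symm,
    tk_ncard_leaves (by omega), tk_ncard_branchVertices (by omega)⟩
end
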